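/- Let φ be a set of UTVPI constraints with constraint graph G_φ. Then φ is satisfiable in ℤ if and only if G_φ has no negative weight cycle and there is no vertex u of G_φ such that u and −u lie on a common zero-weight cycle and wSP(u,−u) is odd. -/

import Mathlib

namespace UTVPIPaper

/-- A linear integer constraint `f ≤ bound`, where `f` is a finitely supported
integer linear form over the variables `X`. -/
structure UC (X : Type*) where
  f : X →₀ ℤ
  bound : ℤ

variable {X : Type*}

/-- `c` is a UTVPI constraint, i.e. of the form `a·x + b·y ≤ d` with `a, b ∈ {-1, 0, 1}`. -/
def UC.IsUTVPI (c : UC X) : Prop :=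
  ∃ (a b : ℤ) (x y : X), (a = -1 ∨ a = 0 ∨ a = 1) ∧ (b = -1 ∨ b = 0 ∨ b = 1) ∧
    c.f = Finsupp.single x a + Finsupp.single y b

/-- The constraint `c` holds under the integer assignment `v`. -/
def UC.holds (v : X → ℤ) (c : UC X) : Prop :=
  (c.f.sum fun x a => a * v x) ≤ c.bound

/-- The assignment `v` satisfies all constraints of `φ`. -/
def Sat (v : X → ℤ) (φ : Set (UC X)) : Prop := ∀ c ∈ φ, c.holds v

/-- `φ` is satisfiable in ℤ. -/
def SatZ (φ : Set (UC X)) : Prop := ∃ v : X → ℤ, Sat v φ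

/-- The constraint `c` holds under the rational assignment `v`. -/
def UC.holdsQ (v : X → ℚ) (c : UC X) : Prop :=
  (c.f.sum fun x a => (a : ℚ) * v x) ≤ (c.bound : ℚ)

/-- `φ` is satisfiable in ℚ. -/
def SatQ (φ : Set (UC X)) : Prop := ∃ v : X → ℚ, ∀ c ∈ φ, c.holdsQ v

/-- The transitive closure `TC(φ)`: the smallest set containing `φ` closed under
the rule: `a·x - c·y ≤ d₁` and `c·y + b·z ≤ d₂` imply `a·x + b·z ≤ d₁ + d₂`,
for `a, b ∈ {-1,0,1}` and `c ∈ {-1,1}`. -/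
inductive TC (φ : Set (UC X)) : UC X → Prop
  | base {c : UC X} : c ∈ φ → TC φ c
  | trans {a b c : ℤ} {x y z : X} {d₁ d₂ : ℤ} :
      (a = -1 ∨ a = 0 ∨ a = 1) → (b = -1 ∨ b = 0 ∨ b = 1) → (c = -1 ∨ c = 1) →
      TC φ ⟨Finsupp.single x a - Finsupp.single y c, d₁⟩ →
      TC φ ⟨Finsupp.single y c + Finsupp.single z b, d₂⟩ →
      TC φ ⟨Finsupp.single x a + Finsupp.single z b, d₁ + d₂⟩

/-- The tightened closure `TI(φ)`: the smallest set containing `φ` closed under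
the rule: `a·x + a·x ≤ d` implies `a·x ≤ ⌊d/2⌋`, for `a ∈ {-1,1}`. -/
inductive TI (φ : Set (UC X)) : UC X → Prop
  | base {c : UC X} : c ∈ φ → TI φ c
  | tighten {a : ℤ} {x : X} {d : ℤ} :
      (a = -1 ∨ a = 1) →
      TI φ ⟨Finsupp.single x a + Finsupp.single x a, d⟩ →
      TI φ ⟨Finsupp.single x a, Int.fdiv d 2⟩

/-- The tightened transitive closure `TTC(φ)`: the smallest set containing `φ`
closed under both the transitivity and the tightening rules. -/
inductive TTC (φ : Set (UC X)) : UC X → Prop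
  | base {c : UC X} : c ∈ φ → TTC φ c
  | trans {a b c : ℤ} {x y z : X} {d₁ d₂ : ℤ} :
      (a = -1 ∨ a = 0 ∨ a = 1) → (b = -1 ∨ b = 0 ∨ b = 1) → (c = -1 ∨ c = 1) →
      TTC φ ⟨Finsupp.single x a - Finsupp.single y c, d₁⟩ →
      TTC φ ⟨Finsupp.single y c + Finsupp.single z b, d₂⟩ →
      TTC φ ⟨Finsupp.single x a + Finsupp.single z b, d₁ + d₂⟩
  | tighten {a : ℤ} {x : X} {d : ℤ} :
      (a = -1 ∨ a = 1) →
      TTC φ ⟨Finsupp.single x a + Finsupp.single x a, d⟩ →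
      TTC φ ⟨Finsupp.single x a, Int.fdiv d 2⟩

/-- Vertices of the constraint graph: `(true, x)` is `x⁺` and `(false, x)` is `x⁻`. -/
abbrev Vtx (X : Type*) := Bool × X

/-- The counterpart `-u` of a vertex `u`. -/
def vneg (u : Vtx X) : Vtx X := (!u.1, u.2)

/-- The set of edges `E(c)` associated with a UTVPI constraint `c`
(the transformation table):
`x - y ≤ d` gives `(y⁺, x⁺, d)` and `(x⁻, y⁻, d)`;
`x + y ≤ d` gives `(y⁻, x⁺, d)` and `(x⁻, y⁺, d)`;
`-x - y ≤ d` gives `(y⁺, x⁻, d)` and `(x⁺, y⁻, d)`;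
`x ≤ d` gives `(x⁻, x⁺, 2d)`; `-x ≤ d` gives `(x⁺, x⁻, 2d)`. -/
def cedges (c : UC X) : Set (Vtx X × Vtx X × ℤ) :=
  { e | ∃ (x y : X) (d : ℤ),
      (c = ⟨Finsupp.single x 1 - Finsupp.single y 1, d⟩ ∧
        (e = ((true, y), (true, x), d) ∨ e = ((false, x), (false, y), d))) ∨
      (c = ⟨Finsupp.single x 1 + Finsupp.single y 1, d⟩ ∧
        (e = ((false, y), (true, x), d) ∨ e = ((false, x), (true, y), d))) ∨
      (c = ⟨-Finsupp.single x 1 - Finsupp.single y 1, d⟩ ∧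
        (e = ((true, y), (false, x), d) ∨ e = ((true, x), (false, y), d))) ∨
      (c = ⟨Finsupp.single x 1, d⟩ ∧ e = ((false, x), (true, x), 2 * d)) ∨
      (c = ⟨-Finsupp.single x 1, d⟩ ∧ e = ((true, x), (false, x), 2 * d)) }

/-- The constraint graph `G_φ` of a set `φ` of UTVPI constraints. -/
def Gr (φ : Set (UC X)) : Set (Vtx X × Vtx X × ℤ) := { e | ∃ c ∈ φ, e ∈ cedges c }

/-- `IsPath E u p v`: `p` is a path (a sequence of consecutive weighted edges,
each belonging to the edge set `E`) from vertex `u` to vertex `v`. -/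
inductive IsPath {V : Type*} (E : Set (V × V × ℤ)) : V → List (V × V × ℤ) → V → Prop
  | nil (v : V) : IsPath E v [] v
  | cons {u v w : V} {d : ℤ} {p : List (V × V × ℤ)} :
      (u, v, d) ∈ E → IsPath E v p w → IsPath E u ((u, v, d) :: p) w

/-- The weight of a path: the sum of the weights of its edges. -/
def pweight {V : Type*} (p : List (V × V × ℤ)) : ℤ := (p.map fun e => e.2.2).sum

/-- The graph `E` has no negative weight cycle. -/
def NoNegCycle {V : Type*} (E : Set (V × V × ℤ)) : Prop :=
  ∀ (v : V) (p : List (V × V × ℤ)), IsPath E v p v → 0 ≤ pweight p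

/-- `wSP E u v` is the minimum weight of a path from `u` to `v` in `E`
(`⊤` if no path exists). -/
noncomputable def wSP {V : Type*} (E : Set (V × V × ℤ)) (u v : V) : WithTop ℤ :=
  sInf {w : WithTop ℤ | ∃ p, IsPath E u p v ∧ (pweight p : WithTop ℤ) = w}

/-- The bounds function `ρ(u) = ⌊wSP(u, -u) / 2⌋` (`⊤` if there is no path from `u` to `-u`). -/
noncomputable def rho (φ : Set (UC X)) (u : Vtx X) : WithTop ℤ :=
  (wSP (Gr φ) u (vneg u)).map fun w => Int.fdiv w 2


/-! ### Auxiliary path lemmas -/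

section Paths

variable {V : Type*} {E : Set (V × V × ℤ)}

lemma IsPath.nil_elim {a b : V} (h : IsPath E a [] b) : a = b := by cases h; rfl

lemma IsPath.cons_elim {a b s t : V} {d : ℤ} {p : List (V × V × ℤ)}
    (h : IsPath E a ((s, t, d) :: p) b) :
    a = s ∧ (s, t, d) ∈ E ∧ IsPath E t p b := by
  cases h; exact ⟨rfl, by assumption, by assumption⟩

lemma IsPath.append {a b c : V} {p q : List (V × V × ℤ)}
    (h : IsPath E a p b) (h' : IsPath E b q c) : IsPath E a (p ++ q) c := by
  induction h with
  | nil => exact h'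
  | cons he _ ih => exact IsPath.cons he (ih h')

lemma IsPath.split {a c : V} {p q : List (V × V × ℤ)}
    (h : IsPath E a (p ++ q) c) : ∃ b, IsPath E a p b ∧ IsPath E b q c := by
  induction p generalizing a with
  | nil => exact ⟨a, IsPath.nil a, h⟩
  | cons e p ih =>
    obtain ⟨s, t, d⟩ := e
    obtain ⟨rfl, he, h'⟩ := h.cons_elim
    obtain ⟨b, h₁, h₂⟩ := ih h'
    exact ⟨b, IsPath.cons he h₁, h₂⟩

lemma IsPath.mem_E {a b : V} {p : List (V × V × ℤ)} (h : IsPath E a p b)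
    {e : V × V × ℤ} (he : e ∈ p) : e ∈ E := by
  induction h with
  | nil => cases he
  | cons hE _ ih =>
    rcases List.mem_cons.1 he with rfl | he
    · exact hE
    · exact ih he

@[simp] lemma pweight_nil : pweight ([] : List (V × V × ℤ)) = 0 := rfl

@[simp] lemma pweight_cons (e : V × V × ℤ) (p : List (V × V × ℤ)) :
    pweight (e :: p) = e.2.2 + pweight p := by simp [pweight]

@[simp] lemma pweight_append (p q : List (V × V × ℤ)) :
    pweight (p ++ q) = pweight p + pweight q := by simp [pweight]

/-- Splitting a path at an edge occurring in it. -/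
lemma IsPath.mem_split {a b : V} {p : List (V × V × ℤ)} (h : IsPath E a p b)
    {e : V × V × ℤ} (he : e ∈ p) :
    ∃ p₁ p₂, p = p₁ ++ e :: p₂ ∧ IsPath E a p₁ e.1 ∧ IsPath E e.2.1 p₂ b := by
  obtain ⟨p₁, p₂, rfl⟩ := List.append_of_mem he
  obtain ⟨m, h₁, h₂⟩ := h.split
  obtain ⟨s, t, d⟩ := e
  obtain ⟨rfl, _, h₃⟩ := h₂.cons_elim
  exact ⟨p₁, p₂, rfl, h₁, h₃⟩

/-- A potential function bounds path weights from below (scaled by `k`). -/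
lemma weight_ge {val : V → ℤ} {k : ℤ} (hval : ∀ e ∈ E, val e.2.1 - val e.1 ≤ k * e.2.2)
    {a b : V} {p : List (V × V × ℤ)} (h : IsPath E a p b) :
    val b - val a ≤ k * pweight p := by
  induction h with
  | nil => simp
  | cons hE hp ih =>
    have := hval _ hE
    simp only [pweight_cons] at *
    have : val _ - val _ ≤ k * _ := this
    nlinarith [this, ih]

/-- Splitting a cycle through two distinct vertices `u`, `w` into two nonempty paths. -/
lemma cycle_split {a u w : V} {p : List (V × V × ℤ)} (h : IsPath E a p a)
    (hu : ∃ e ∈ p, e.1 = u) (hw : ∃ e ∈ p, e.1 = w) (huw : u ≠ w) :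
    ∃ q r, IsPath E u q w ∧ IsPath E w r u ∧ pweight q + pweight r = pweight p ∧
      q ≠ [] ∧ r ≠ [] := by
  obtain ⟨e, hep, rfl⟩ := hu
  obtain ⟨p₁, p₂, rfl, h₁, h₂⟩ := h.mem_split hep
  -- h₁ : a → e.1 via p₁ ; path e.1 → a via e :: p₂
  have hcons : IsPath E e.1 (e :: p₂) a := by
    obtain ⟨s, t, d⟩ := e
    exact IsPath.cons (h.mem_E hep) h₂
  obtain ⟨e', he'p, rfl⟩ := hw
  rcases List.mem_append.1 he'p with hmem | hmem
  · -- e' in p₁ : a → e'.1 → e.1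
    obtain ⟨s₁, s₂, rfl, g₁, g₂⟩ := h₁.mem_split hmem
    obtain ⟨s, t, d⟩ := e'
    have g₃ : IsPath E s (( s,t,d) :: s₂) e.1 := IsPath.cons (h.mem_E (by simp)) g₂
    refine ⟨(e :: p₂) ++ s₁, (s,t,d) :: s₂, hcons.append g₁, g₃, by simp <;> omega, by simp, by simp⟩
  · -- e' in e :: p₂
    obtain ⟨s₁, s₂, heq, g₁, g₂⟩ := hcons.mem_split hmem
    obtain ⟨s, t, d⟩ := e'
    have g₃ : IsPath E s ((s,t,d) :: s₂) a := IsPath.cons (h.mem_E (List.mem_append_right _ hmem)) g₂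
    refine ⟨s₁, ((s,t,d) :: s₂) ++ p₁, g₁, g₃.append h₁, ?_, ?_, by simp⟩
    · have := congrArg pweight heq
      simp at this ⊢
      omega
    · rintro rfl
      exact huw (g₁.nil_elim)

end Paths
/-! ### Infimum helpers for `wSP` -/

section WSP

variable {V : Type*} {E : Set (V × V × ℤ)} {u v : V}

lemma wSP_eq {p₀ : List (V × V × ℤ)} {m : ℤ} (hp₀ : IsPath E u p₀ v) (hw : pweight p₀ = m)
    (hlb : ∀ p, IsPath E u p v → m ≤ pweight p) : wSP E u v = (m : WithTop ℤ) := by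
  have hbdd : BddBelow {w : WithTop ℤ | ∃ p, IsPath E u p v ∧ (pweight p : WithTop ℤ) = w} := by
    refine ⟨(m : WithTop ℤ), ?_⟩
    rintro w ⟨p, hp, rfl⟩
    exact_mod_cast hlb p hp
  have hglb := WithTop.isGLB_sInf' hbdd
  refine le_antisymm (hglb.1 ⟨p₀, hp₀, by rw [hw]⟩) (hglb.2 ?_)
  rintro w ⟨p, hp, rfl⟩
  exact_mod_cast hlb p hp

lemma wSP_attained {b t : ℤ} (hlb : ∀ p, IsPath E u p v → b ≤ pweight p)
    (ht : wSP E u v = (t : WithTop ℤ)) :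
    (∃ p, IsPath E u p v ∧ pweight p = t) ∧ ∀ p, IsPath E u p v → t ≤ pweight p := by
  have hbdd : BddBelow {w : WithTop ℤ | ∃ p, IsPath E u p v ∧ (pweight p : WithTop ℤ) = w} := by
    refine ⟨(b : WithTop ℤ), ?_⟩
    rintro w ⟨p, hp, rfl⟩
    exact_mod_cast hlb p hp
  have hglb := WithTop.isGLB_sInf' hbdd
  rw [show sInf {w : WithTop ℤ | ∃ p, IsPath E u p v ∧ (pweight p : WithTop ℤ) = w} = wSP E u v
    from rfl, ht] at hglb
  have hlow : ∀ p, IsPath E u p v → t ≤ pweight p := by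
    intro p hp
    exact_mod_cast hglb.1 ⟨p, hp, rfl⟩
  refine ⟨?_, hlow⟩
  by_contra hno
  push_neg at hno
  have : ((t + 1 : ℤ) : WithTop ℤ) ≤ (t : WithTop ℤ) := by
    refine hglb.2 ?_
    rintro w ⟨p, hp, rfl⟩
    have h1 := hlow p hp
    have h2 := hno p hp
    exact_mod_cast by omega
  have : (t + 1 : ℤ) ≤ t := by exact_mod_cast this
  omega

end WSP

/-! ### Basic facts about `vneg` -/

@[simp] lemma vneg_vneg (u : Vtx X) : vneg (vneg u) = u := by
  simp [vneg]

lemma vneg_ne (u : Vtx X) : u ≠ vneg u := by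
  rcases u with ⟨b, x⟩
  cases b <;> simp [vneg]

/-! ### Finsupp sum computations -/

lemma sumv (v : X → ℤ) (x y : X) (a b : ℤ) :
    ((Finsupp.single x a + Finsupp.single y b).sum fun i t => t * v i) = a * v x + b * v y := by
  rw [Finsupp.sum_add_index' (fun i => zero_mul (v i)) (fun i t₁ t₂ => add_mul t₁ t₂ (v i)),
    Finsupp.sum_single_index (zero_mul (v x)), Finsupp.sum_single_index (zero_mul (v y))]

lemma sumv1 (v : X → ℤ) (x : X) (a : ℤ) :
    ((Finsupp.single x a).sum fun i t => t * v i) = a * v x :=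
  Finsupp.sum_single_index (zero_mul (v x))

lemma sum_pat1 (v : X → ℤ) (x y : X) :
    ((Finsupp.single x (1:ℤ) - Finsupp.single y (1:ℤ)).sum fun i t => t * v i) = v x - v y := by
  rw [sub_eq_add_neg, ← Finsupp.single_neg, sumv]; ring

lemma sum_pat2 (v : X → ℤ) (x y : X) :
    ((Finsupp.single x (1:ℤ) + Finsupp.single y (1:ℤ)).sum fun i t => t * v i) = v x + v y := by
  rw [sumv]; ring

lemma sum_pat3 (v : X → ℤ) (x y : X) :
    ((-Finsupp.single x (1:ℤ) - Finsupp.single y (1:ℤ)).sum fun i t => t * v i) = -v x - v y := by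
  rw [sub_eq_add_neg, ← Finsupp.single_neg, ← Finsupp.single_neg, sumv]; ring

lemma sum_pat4 (v : X → ℤ) (x : X) :
    ((Finsupp.single x (1:ℤ)).sum fun i t => t * v i) = v x := by
  rw [sumv1]; ring

lemma sum_pat5 (v : X → ℤ) (x : X) :
    ((-Finsupp.single x (1:ℤ)).sum fun i t => t * v i) = -v x := by
  rw [← Finsupp.single_neg, sumv1]; ring

/-! ### The forward potential -/

/-- The vertex potential induced by an assignment. -/
def valF (v : X → ℤ) (u : Vtx X) : ℤ := if u.1 then v u.2 else -v u.2

@[simp] lemma valF_pos (v : X → ℤ) (x : X) : valF v (true, x) = v x := rfl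

@[simp] lemma valF_neg (v : X → ℤ) (x : X) : valF v (false, x) = -v x := rfl

lemma valF_vneg (v : X → ℤ) (u : Vtx X) : valF v (vneg u) = -valF v u := by
  rcases u with ⟨b, x⟩; cases b <;> simp [valF, vneg]

/-- Each edge of the constraint graph of a satisfied constraint set gives a
potential inequality. -/
lemma edge_ineq {φ : Set (UC X)} {v : X → ℤ} (hsat : Sat v φ) {e : Vtx X × Vtx X × ℤ}
    (he : e ∈ Gr φ) : valF v e.2.1 - valF v e.1 ≤ e.2.2 := by
  obtain ⟨c, hc, x, y, d, hcase⟩ := he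
  have hh := hsat c hc
  rcases hcase with ⟨hcf, he⟩ | ⟨hcf, he⟩ | ⟨hcf, he⟩ | ⟨hcf, he⟩ | ⟨hcf, he⟩
  · rw [hcf] at hh; unfold UC.holds at hh; dsimp only at hh; rw [sum_pat1] at hh
    rcases he with rfl | rfl <;> simp <;> omega
  · rw [hcf] at hh; unfold UC.holds at hh; dsimp only at hh; rw [sum_pat2] at hh
    rcases he with rfl | rfl <;> simp <;> omega
  · rw [hcf] at hh; unfold UC.holds at hh; dsimp only at hh; rw [sum_pat3] at hh
    rcases he with rfl | rfl <;> simp <;> omega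
  · rw [hcf] at hh; unfold UC.holds at hh; dsimp only at hh; rw [sum_pat4] at hh
    subst he; simp; omega
  · rw [hcf] at hh; unfold UC.holds at hh; dsimp only at hh; rw [sum_pat5] at hh
    subst he; simp; omega

/-- The constraint graph is symmetric under negating and swapping endpoints. -/
lemma Gr_symm {φ : Set (UC X)} {e : Vtx X × Vtx X × ℤ} (he : e ∈ Gr φ) :
    (vneg e.2.1, vneg e.1, e.2.2) ∈ Gr φ := by
  obtain ⟨c, hc, x, y, d, hcase⟩ := he
  refine ⟨c, hc, x, y, d, ?_⟩
  rcases hcase with ⟨hcf, he⟩ | ⟨hcf, he⟩ | ⟨hcf, he⟩ | ⟨hcf, he⟩ | ⟨hcf, he⟩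
  · exact Or.inl ⟨hcf, by rcases he with rfl | rfl <;> simp [vneg]⟩
  · exact Or.inr (Or.inl ⟨hcf, by rcases he with rfl | rfl <;> simp [vneg]⟩)
  · exact Or.inr (Or.inr (Or.inl ⟨hcf, by rcases he with rfl | rfl <;> simp [vneg]⟩))
  · exact Or.inr (Or.inr (Or.inr (Or.inl ⟨hcf, by subst he; simp [vneg]⟩)))
  · exact Or.inr (Or.inr (Or.inr (Or.inr ⟨hcf, by subst he; simp [vneg]⟩)))
/-! ### The forward direction -/

lemma forward_dir {φ : Set (UC X)} (h : SatZ φ) :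
    NoNegCycle (Gr φ) ∧
      ¬ ∃ (u a : Vtx X) (p : List (Vtx X × Vtx X × ℤ)),
        IsPath (Gr φ) a p a ∧ p ≠ [] ∧ pweight p = 0 ∧
        u ∈ p.map (fun e => e.1) ∧ vneg u ∈ p.map (fun e => e.1) ∧
        ∃ t : ℤ, wSP (Gr φ) u (vneg u) = (t : WithTop ℤ) ∧ Odd t := by
  obtain ⟨v, hsat⟩ := h
  have hval : ∀ e ∈ Gr φ, valF v e.2.1 - valF v e.1 ≤ 1 * e.2.2 := by
    intro e he; rw [one_mul]; exact edge_ineq hsat he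
  have hnn : NoNegCycle (Gr φ) := by
    intro a p hp
    have := weight_ge hval hp
    omega
  refine ⟨hnn, ?_⟩
  rintro ⟨u, a, p, hp, -, hw0, hu, hnu, t, ht, hodd⟩
  rw [List.mem_map] at hu hnu
  obtain ⟨q, r, hq, hr, hqr, -, -⟩ := cycle_split hp hu hnu (vneg_ne u)
  -- lower bound for all paths from u to vneg u
  have hlb : ∀ p', IsPath (Gr φ) u p' (vneg u) → -valF v u - valF v u ≤ pweight p' := by
    intro p' hp'
    have := weight_ge hval hp'
    rw [valF_vneg] at this
    omega
  obtain ⟨⟨p₁, hp₁, hw₁⟩, hlow⟩ := wSP_attained hlb ht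
  -- from the path of weight t : -2 val u ≤ t
  have h1 := weight_ge hval hp₁
  rw [valF_vneg] at h1
  -- from r : 2 val u ≤ pweight r = -pweight q ≤ -t
  have h2 := weight_ge hval hr
  rw [valF_vneg] at h2
  have h3 := hlow q hq
  obtain ⟨k, hk⟩ := hodd
  omega
/-! ### Finiteness of the core of the constraint graph -/

lemma finite_lists {α : Type*} {s : Set α} (hs : s.Finite) :
    ∀ n : ℕ, {l : List α | l.length ≤ n ∧ ∀ x ∈ l, x ∈ s}.Finite := by
  intro n
  induction n with
  | zero =>
    refine Set.Finite.subset (Set.finite_singleton []) ?_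
    rintro l ⟨hl, -⟩
    simpa using List.length_eq_zero_iff.1 (Nat.le_zero.1 hl)
  | succ n ih =>
    refine Set.Finite.subset ((Set.Finite.image2 List.cons hs ih).insert []) ?_
    rintro l ⟨hl, hmem⟩
    cases l with
    | nil => exact Set.mem_insert _ _
    | cons x l =>
      refine Set.mem_insert_of_mem _ (Set.mem_image2_of_mem (hmem x (by simp)) ?_)
      exact ⟨by simpa using hl, fun y hy => hmem y (by simp [hy])⟩

lemma length_le_ncard {α : Type*} {l : List α} {s : Set α} (h : l.Nodup)
    (hsub : ∀ x ∈ l, x ∈ s) (hs : s.Finite) : l.length ≤ s.ncard := by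
  classical
  rw [← List.toFinset_card_of_nodup h, Set.ncard_eq_toFinset_card _ hs]
  refine Finset.card_le_card ?_
  intro x hx
  rw [Set.Finite.mem_toFinset]
  exact hsub x (List.mem_toFinset.1 hx)

lemma supp_add_left (x y : X) :
    x ∈ (Finsupp.single x (1:ℤ) + Finsupp.single y (1:ℤ)).support := by
  classical
  rw [Finsupp.mem_support_iff, Finsupp.add_apply, Finsupp.single_eq_same,
    Finsupp.single_apply]
  split <;> omega

lemma supp_add_right (x y : X) :
    y ∈ (Finsupp.single x (1:ℤ) + Finsupp.single y (1:ℤ)).support := by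
  rw [add_comm]; exact supp_add_left y x

lemma supp_sub_left {x y : X} (hxy : x ≠ y) :
    x ∈ (Finsupp.single x (1:ℤ) - Finsupp.single y (1:ℤ)).support := by
  rw [Finsupp.mem_support_iff, Finsupp.sub_apply, Finsupp.single_eq_same,
    Finsupp.single_eq_of_ne' (Ne.symm hxy)]
  omega

lemma supp_sub_right {x y : X} (hxy : x ≠ y) :
    y ∈ (Finsupp.single x (1:ℤ) - Finsupp.single y (1:ℤ)).support := by
  rw [Finsupp.mem_support_iff, Finsupp.sub_apply, Finsupp.single_eq_same,
    Finsupp.single_eq_of_ne' hxy]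
  omega

lemma neg_sub_eq (x y : X) :
    -Finsupp.single x (1:ℤ) - Finsupp.single y (1:ℤ)
      = -(Finsupp.single x (1:ℤ) + Finsupp.single y (1:ℤ)) := by abel

lemma supp_nsub_left (x y : X) :
    x ∈ (-Finsupp.single x (1:ℤ) - Finsupp.single y (1:ℤ)).support := by
  rw [neg_sub_eq, Finsupp.support_neg]; exact supp_add_left x y

lemma supp_nsub_right (x y : X) :
    y ∈ (-Finsupp.single x (1:ℤ) - Finsupp.single y (1:ℤ)).support := by
  rw [neg_sub_eq, Finsupp.support_neg]; exact supp_add_right x y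

lemma supp_single (x : X) : x ∈ (Finsupp.single x (1:ℤ)).support := by
  rw [Finsupp.mem_support_iff, Finsupp.single_eq_same]; omega

lemma supp_nsingle (x : X) : x ∈ (-Finsupp.single x (1:ℤ)).support := by
  rw [Finsupp.support_neg]; exact supp_single x

lemma coreE_finite {φ : Set (UC X)} (hfin : φ.Finite) :
    {e ∈ Gr φ | e.1 ≠ e.2.1}.Finite := by
  classical
  have hbox : ∀ c : UC X, (((Set.univ : Set Bool) ×ˢ (↑c.f.support : Set X)) ×ˢ
      (((Set.univ : Set Bool) ×ˢ (↑c.f.support : Set X)) ×ˢ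
        ({c.bound, 2 * c.bound} : Set ℤ))).Finite := by
    intro c
    refine Set.Finite.prod (Set.finite_univ.prod (c.f.support).finite_toSet)
      (Set.Finite.prod (Set.finite_univ.prod (c.f.support).finite_toSet) ?_)
    exact (Set.finite_singleton _).insert _
  refine Set.Finite.subset (Set.Finite.biUnion hfin (fun c _ => hbox c)) ?_
  rintro e ⟨⟨c, hc, x, y, d, hcase⟩, hne⟩
  refine Set.mem_biUnion hc ?_
  rcases hcase with ⟨hcf, he⟩ | ⟨hcf, he⟩ | ⟨hcf, he⟩ | ⟨hcf, he⟩ | ⟨hcf, he⟩ <;> subst hcf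
  · have hxy : x ≠ y := by
      rintro rfl
      rcases he with rfl | rfl <;> exact hne rfl
    rcases he with rfl | rfl <;>
      simp [Set.mem_prod, supp_sub_left hxy, supp_sub_right hxy]
  · rcases he with rfl | rfl <;>
      simp [Set.mem_prod, supp_add_left x y, supp_add_right x y]
  · rcases he with rfl | rfl <;>
      simp [Set.mem_prod, supp_nsub_left x y, supp_nsub_right x y]
  · subst he; simp [Set.mem_prod, supp_single x]
  · subst he; simp [Set.mem_prod, supp_nsingle x]

/-! ### Reduction of paths to simple core paths -/

lemma exists_dup_of_map {α β : Type*} (f : α → β) :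
    ∀ l : List α, ¬ (l.map f).Nodup →
      ∃ (x y : α) (l₁ l₂ l₃ : List α), l = (l₁ ++ x :: l₂) ++ y :: l₃ ∧ f x = f y := by
  intro l
  induction l with
  | nil => intro h; simp at h
  | cons a l ih =>
    intro h
    by_cases hmem : f a ∈ l.map f
    · obtain ⟨y, hy, hfy⟩ := List.mem_map.1 hmem
      obtain ⟨l₂, l₃, rfl⟩ := List.append_of_mem hy
      exact ⟨a, y, [], l₂, l₃, by simp, hfy.symm⟩
    · have h' : ¬ (l.map f).Nodup := by
        intro hn
        exact h (by simp only [List.map_cons, List.nodup_cons]; exact ⟨hmem, hn⟩)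
      obtain ⟨x, y, l₁, l₂, l₃, rfl, hxy⟩ := ih h'
      exact ⟨x, y, a :: l₁, l₂, l₃, by simp, hxy⟩

lemma reduce {φ : Set (UC X)} (hnn : NoNegCycle (Gr φ)) :
    ∀ (n : ℕ) (p : List (Vtx X × Vtx X × ℤ)) (a b : Vtx X), p.length ≤ n →
      IsPath (Gr φ) a p b →
    ∃ q, IsPath (Gr φ) a q b ∧ pweight q ≤ pweight p ∧
      (∀ e ∈ q, e ∈ Gr φ ∧ e.1 ≠ e.2.1) ∧ (q.map (fun e => e.1)).Nodup := by
  intro n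
  induction n with
  | zero =>
    intro p a b hlen hp
    have : p = [] := List.length_eq_zero_iff.1 (Nat.le_zero.1 hlen)
    subst this
    exact ⟨[], hp, le_refl _, by simp, by simp⟩
  | succ n ih =>
    intro p a b hlen hp
    by_cases hsl : ∃ e ∈ p, e.1 = e.2.1
    · obtain ⟨e, hep, hee⟩ := hsl
      obtain ⟨p₁, p₂, rfl, h₁, h₂⟩ := hp.mem_split hep
      have hd : 0 ≤ e.2.2 := by
        have hloop : IsPath (Gr φ) e.1 [e] e.1 := by
          obtain ⟨s, t, d⟩ := e
          simp only at hee
          subst hee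
          exact IsPath.cons (hp.mem_E hep) (IsPath.nil s)
        have := hnn _ _ hloop
        simpa using this
      rw [← hee] at h₂
      have hpath : IsPath (Gr φ) a (p₁ ++ p₂) b := h₁.append h₂
      have hlen' : (p₁ ++ p₂).length ≤ n := by
        simp only [List.length_append, List.length_cons] at hlen ⊢
        omega
      obtain ⟨q, hq, hw, hcore, hnd⟩ := ih _ _ _ hlen' hpath
      refine ⟨q, hq, ?_, hcore, hnd⟩
      simp only [pweight_append, pweight_cons] at hw ⊢
      omega
    · by_cases hnd : (p.map (fun e => e.1)).Nodup
      · exact ⟨p, hp, le_refl _, fun e he => ⟨hp.mem_E he, fun h => hsl ⟨e, he, h⟩⟩, hnd⟩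
      · obtain ⟨e₁, e₂, l₁, l₂, l₃, rfl, h12⟩ := exists_dup_of_map _ _ hnd
        obtain ⟨s₁, t₁, d₁⟩ := e₁
        obtain ⟨s₂, t₂, d₂⟩ := e₂
        obtain ⟨m₂, g₁, g₂⟩ := hp.split
        obtain ⟨m₁, g₃, g₄⟩ := g₁.split
        obtain ⟨rfl, he₁, g₅⟩ := g₄.cons_elim
        obtain ⟨rfl, he₂, g₆⟩ := g₂.cons_elim
        simp only at h12
        subst h12
        have hcyc : IsPath (Gr φ) m₁ ((m₁, t₁, d₁) :: l₂) m₁ := IsPath.cons he₁ g₅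
        have hcw := hnn _ _ hcyc
        have hpath : IsPath (Gr φ) a (l₁ ++ (m₁, t₂, d₂) :: l₃) b :=
          g₃.append (IsPath.cons he₂ g₆)
        have hlen' : (l₁ ++ (m₁, t₂, d₂) :: l₃).length ≤ n := by
          simp only [List.length_append, List.length_cons] at hlen ⊢
          omega
        obtain ⟨q, hq, hw, hcore, hnd'⟩ := ih _ _ _ hlen' hpath
        refine ⟨q, hq, ?_, hcore, hnd'⟩
        simp only [pweight_append, pweight_cons] at hw hcw ⊢
        omega

lemma IsPath.last_target {V : Type*} {E : Set (V × V × ℤ)} :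
    ∀ {p : List (V × V × ℤ)} {a b : V}, IsPath E a p b → p ≠ [] → ∃ e ∈ p, e.2.1 = b := by
  intro p
  induction p with
  | nil => intro a b _ h; exact absurd rfl h
  | cons e p ih =>
    intro a b hp _
    obtain ⟨s, t, d⟩ := e
    obtain ⟨rfl, -, htail⟩ := hp.cons_elim
    cases p with
    | nil => exact ⟨(a, t, d), by simp, htail.nil_elim⟩
    | cons e' p' =>
      obtain ⟨e'', he'', htarget⟩ := ih htail (by simp)
      exact ⟨e'', by simp [he''], htarget⟩

/-! ### Existence of an integer potential -/

lemma exists_potential {φ : Set (UC X)} (hfin : φ.Finite) (hnn : NoNegCycle (Gr φ)) :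
    ∃ π : Vtx X → ℤ, (∀ e ∈ Gr φ, π e.2.1 - π e.1 ≤ e.2.2) ∧ {u | π u ≠ 0}.Finite := by
  classical
  set E₀ := {e ∈ Gr φ | e.1 ≠ e.2.1} with hE₀def
  have hE₀ : E₀.Finite := coreE_finite hfin
  set S : Set (Vtx X) := (fun e => e.1) '' E₀ with hSdef
  have hS : S.Finite := hE₀.image _
  set Q : Set (List (Vtx X × Vtx X × ℤ)) :=
    {l | l.length ≤ S.ncard ∧ ∀ e ∈ l, e ∈ E₀} with hQdef
  have hQ : Q.Finite := finite_lists hE₀ _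
  set Pend : Vtx X → Set ℤ := fun t =>
    {w : ℤ | ∃ a q, IsPath (Gr φ) a q t ∧ q ∈ Q ∧ pweight q = w} with hPenddef
  have hPfin : ∀ t, (Pend t).Finite := by
    intro t
    refine Set.Finite.subset (hQ.image pweight) ?_
    rintro w ⟨a, q, -, hqQ, rfl⟩
    exact ⟨q, hqQ, rfl⟩
  have hP0 : ∀ t, (0 : ℤ) ∈ Pend t := by
    intro t
    exact ⟨t, [], IsPath.nil t, ⟨by simp, by simp⟩, rfl⟩
  set π : Vtx X → ℤ := fun t => sInf (Pend t) with hπdef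
  have hπmem : ∀ t, π t ∈ Pend t := fun t => Int.csInf_mem ⟨0, hP0 t⟩ (hPfin t).bddBelow
  have hπle : ∀ t, ∀ w ∈ Pend t, π t ≤ w := fun t w hw => csInf_le (hPfin t).bddBelow hw
  -- `q ∈ Q` from a reduced path
  have hmkQ : ∀ (a t : Vtx X) (q : List (Vtx X × Vtx X × ℤ)), IsPath (Gr φ) a q t →
      (∀ e ∈ q, e ∈ Gr φ ∧ e.1 ≠ e.2.1) → (q.map (fun e => e.1)).Nodup → q ∈ Q := by
    intro a t q hq hcore hnd
    refine ⟨?_, fun e he => ⟨(hcore e he).1, (hcore e he).2⟩⟩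
    have := length_le_ncard hnd (fun x hx => ?_) hS
    · simpa using this
    · obtain ⟨e, he, rfl⟩ := List.mem_map.1 hx
      exact ⟨e, hcore e he, rfl⟩
  refine ⟨π, ?_, ?_⟩
  · rintro ⟨s, t, d⟩ he
    by_cases hself : s = t
    · subst hself
      have hloop : IsPath (Gr φ) s [(s, s, d)] s := IsPath.cons he (IsPath.nil s)
      have := hnn _ _ hloop
      simp only at this ⊢
      simpa using this
    · obtain ⟨a, q, hq, hqQ, hw⟩ := hπmem s
      have hq' : IsPath (Gr φ) a (q ++ [(s, t, d)]) t :=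
        hq.append (IsPath.cons he (IsPath.nil t))
      obtain ⟨r, hr, hrw, hrcore, hrnd⟩ :=
        reduce hnn (q ++ [(s, t, d)]).length _ _ _ (le_refl _) hq'
      have hrQ : r ∈ Q := hmkQ _ _ _ hr hrcore hrnd
      have : π t ≤ pweight r := hπle t _ ⟨a, r, hr, hrQ, rfl⟩
      simp only [pweight_append, pweight_cons, pweight_nil] at hrw
      simp only
      omega
  · refine Set.Finite.subset (hE₀.image (fun e => e.2.1)) ?_
    intro t ht
    by_contra htmem
    apply ht
    have : Pend t = {0} := by
      apply Set.eq_singleton_iff_unique_mem.2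
      refine ⟨hP0 t, ?_⟩
      rintro w ⟨a, q, hq, hqQ, rfl⟩
      rcases eq_or_ne q [] with rfl | hqne
      · rfl
      · obtain ⟨e, he, htarget⟩ := hq.last_target hqne
        exact absurd ⟨e, hqQ.2 e he, htarget⟩ htmem
    simp only [hπdef, this, csInf_singleton]
/-! ### Parity fixing -/

/-- Arithmetic core of the parity-fixing step. -/
lemma step_bound {ts tt d ps pt qs qt : ℤ} (hbase : tt - ts ≤ 2 * d)
    (hps : ps = 0 ∨ ps = 1) (hpt : pt = 0 ∨ pt = 1) (hqs : qs = 0 ∨ qs = 1)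
    (hqt : qt = 0 ∨ qt = 1)
    (ht1 : ps = 1 → tt - ts = 2 * d → pt = 1)
    (ht2 : qt = 1 → tt - ts = 2 * d → qs = 1)
    (hodd : ps = 1 → qt = 1 → ts % 2 = 1 ∧ tt % 2 = 1) :
    (tt - pt + qt) - (ts - ps + qs) ≤ 2 * d := by
  rcases hps with rfl | rfl <;> rcases hpt with rfl | rfl <;> rcases hqs with rfl | rfl <;>
    rcases hqt with rfl | rfl <;> simp_all <;> omega

/-- The negation of a statement of the odd-zero-cycle condition. -/
def NoOddZero (φ : Set (UC X)) : Prop :=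
  ¬ ∃ (u a : Vtx X) (p : List (Vtx X × Vtx X × ℤ)),
      IsPath (Gr φ) a p a ∧ p ≠ [] ∧ pweight p = 0 ∧
      u ∈ p.map (fun e => e.1) ∧ vneg u ∈ p.map (fun e => e.1) ∧
      ∃ t : ℤ, wSP (Gr φ) u (vneg u) = (t : WithTop ℤ) ∧ Odd t

lemma parity_fix {φ : Set (UC X)} (hno : NoOddZero φ) :
    ∀ (n : ℕ) (θ : Vtx X → ℤ), (∀ u, θ (vneg u) = -θ u) →
      (∀ e ∈ Gr φ, θ e.2.1 - θ e.1 ≤ 2 * e.2.2) →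
      {u | Odd (θ u)}.Finite → {u | Odd (θ u)}.ncard ≤ n →
      ∃ θ' : Vtx X → ℤ, (∀ u, θ' (vneg u) = -θ' u) ∧
        (∀ e ∈ Gr φ, θ' e.2.1 - θ' e.1 ≤ 2 * e.2.2) ∧ ∀ u, Even (θ' u) := by
  intro n
  induction n with
  | zero =>
    intro θ hanti hpot hfin hcard
    have hempty : {u | Odd (θ u)} = ∅ := (Set.ncard_eq_zero hfin).1 (Nat.le_zero.1 hcard)
    refine ⟨θ, hanti, hpot, fun u => Int.not_odd_iff_even.1 fun hu => ?_⟩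
    exact absurd (show u ∈ (∅ : Set (Vtx X)) from hempty ▸ hu) (Set.notMem_empty u)
  | succ n ih =>
    intro θ hanti hpot hfin hcard
    rcases Set.eq_empty_or_nonempty {u | Odd (θ u)} with hO | ⟨u₀, hu₀⟩
    · refine ⟨θ, hanti, hpot, fun u => Int.not_odd_iff_even.1 fun hu => ?_⟩
      exact absurd (show u ∈ (∅ : Set (Vtx X)) from hO ▸ hu) (Set.notMem_empty u)
    · classical
      set R : Vtx X → Vtx X → Prop :=
        fun s t => Odd (θ s) ∧ ∃ d, (s, t, d) ∈ Gr φ ∧ θ t - θ s = 2 * d with hRdef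
      have hRodd : ∀ {s t}, R s t → Odd (θ t) := by
        rintro s t ⟨⟨k, hk⟩, d, -, hd⟩
        exact ⟨k + d, by omega⟩
      have hRneg : ∀ {s t}, R s t → R (vneg t) (vneg s) := by
        rintro s t h
        have hot : Odd (θ t) := hRodd h
        obtain ⟨hs, d, he, hd⟩ := h
        refine ⟨?_, d, Gr_symm (e := (s, t, d)) he, ?_⟩
        · rw [hanti]
          obtain ⟨k, hk⟩ := hot
          exact ⟨-(k+1), by omega⟩
        · rw [hanti, hanti]; omega
      have hrtg_neg : ∀ {s t}, Relation.ReflTransGen R s t →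
          Relation.ReflTransGen R (vneg t) (vneg s) := by
        intro s t h
        induction h with
        | refl => exact .refl
        | tail _ hbc ih2 => exact Relation.ReflTransGen.head (hRneg hbc) ih2
      have hrtg_odd : ∀ {s t}, Relation.ReflTransGen R s t → Odd (θ s) → Odd (θ t) := by
        intro s t h
        induction h with
        | refl => exact id
        | tail _ hbc _ => exact fun _ => hRodd hbc
      have hrtg_path : ∀ {s t}, Relation.ReflTransGen R s t →
          ∃ p, IsPath (Gr φ) s p t ∧ 2 * pweight p = θ t - θ s ∧ (s ≠ t → p ≠ []) := by
        intro s t h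
        induction h with
        | refl => exact ⟨[], IsPath.nil s, by simp, fun h => absurd rfl h⟩
        | @tail b c _ hbc ih2 =>
          obtain ⟨p, hp, hw, -⟩ := ih2
          obtain ⟨-, d, he, hd⟩ := hbc
          refine ⟨p ++ [(b, c, d)], hp.append (IsPath.cons he (IsPath.nil c)), ?_, ?_⟩
          · simp only [pweight_append, pweight_cons, pweight_nil]; omega
          · intro _; simp
      have hkey : ∀ w, Odd (θ w) → Relation.ReflTransGen R w (vneg w) →
          Relation.ReflTransGen R (vneg w) w → False := by
        intro w hw h1 h2
        obtain ⟨p₁, hp₁, hw₁, hne₁⟩ := hrtg_path h1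
        obtain ⟨p₂, hp₂, hw₂, hne₂⟩ := hrtg_path h2
        have hne : w ≠ vneg w := vneg_ne w
        have hp₁ne : p₁ ≠ [] := hne₁ hne
        have hp₂ne : p₂ ≠ [] := hne₂ (Ne.symm hne)
        have hanw := hanti w
        apply hno
        refine ⟨w, w, p₁ ++ p₂, hp₁.append hp₂, ?_, ?_, ?_, ?_, -θ w, ?_, ?_⟩
        · intro hcontra
          exact hp₁ne (List.append_eq_nil_iff.1 hcontra).1
        · simp only [pweight_append]; omega
        · cases p₁ with
          | nil => exact absurd rfl hp₁ne
          | cons e p =>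
            obtain ⟨s, t, d⟩ := e
            obtain ⟨rfl, -, -⟩ := hp₁.cons_elim
            simp
        · cases p₂ with
          | nil => exact absurd rfl hp₂ne
          | cons e p =>
            obtain ⟨s, t, d⟩ := e
            obtain ⟨rfl, -, -⟩ := hp₂.cons_elim
            simp
        · refine wSP_eq hp₁ (by omega) ?_
          intro q hq
          have := weight_ge (k := 2) hpot hq
          omega
        · obtain ⟨k, hk⟩ := hw
          exact ⟨-(k+1), by omega⟩
      obtain ⟨u, hu, hnr⟩ : ∃ u, Odd (θ u) ∧ ¬ Relation.ReflTransGen R u (vneg u) := by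
        by_cases h : Relation.ReflTransGen R u₀ (vneg u₀)
        · refine ⟨vneg u₀, ?_, ?_⟩
          · rw [hanti]
            obtain ⟨k, hk⟩ := hu₀
            exact ⟨-(k+1), by omega⟩
          · rw [vneg_vneg]
            intro h2
            exact hkey u₀ hu₀ h h2
        · exact ⟨u₀, hu₀, h⟩
      set A : Set (Vtx X) := {v | Relation.ReflTransGen R u v} with hAdef
      have hAodd : ∀ v ∈ A, Odd (θ v) := fun v hv => hrtg_odd hv hu
      have hAnotneg : ∀ v ∈ A, vneg v ∉ A := by
        intro v hv hnv
        have h2 := hrtg_neg hnv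
        rw [vneg_vneg] at h2
        exact hnr (hv.trans h2)
      have hAclosed : ∀ v t d, v ∈ A → (v, t, d) ∈ Gr φ → θ t - θ v = 2 * d → t ∈ A :=
        fun v t d hv he hd => hv.tail ⟨hAodd v hv, d, he, hd⟩
      set θ' : Vtx X → ℤ :=
        fun v => θ v - (if v ∈ A then 1 else 0) + (if vneg v ∈ A then 1 else 0) with hθ'def
      have ifone : ∀ v : Vtx X, (if v ∈ A then (1:ℤ) else 0) = 1 → v ∈ A := by
        intro v; split
        · exact fun _ => by assumption
        · omega
      have ifzo : ∀ v : Vtx X, (if v ∈ A then (1:ℤ) else 0) = 0 ∨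
          (if v ∈ A then (1:ℤ) else 0) = 1 := by
        intro v; split <;> simp
      have ifmem : ∀ v : Vtx X, v ∈ A → (if v ∈ A then (1:ℤ) else 0) = 1 := by
        intro v hv; simp [hv]
      have hanti' : ∀ v, θ' (vneg v) = -θ' v := by
        intro v
        simp only [hθ'def, vneg_vneg, hanti]
        ring
      have hpot' : ∀ e ∈ Gr φ, θ' e.2.1 - θ' e.1 ≤ 2 * e.2.2 := by
        rintro ⟨s, t, d⟩ he
        have hbase := hpot _ he
        simp only at hbase ⊢
        simp only [hθ'def]
        refine step_bound hbase (ifzo s) (ifzo t) (ifzo (vneg s)) (ifzo (vneg t)) ?_ ?_ ?_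
        · intro hps hd
          exact ifmem t (hAclosed s t d (ifone s hps) he hd)
        · intro hqt hd
          refine ifmem (vneg s) (hAclosed (vneg t) (vneg s) d (ifone (vneg t) hqt)
            (Gr_symm (e := (s, t, d)) he) ?_)
          rw [hanti, hanti]; omega
        · intro hps hqt
          have h1 : Odd (θ s) := hAodd s (ifone s hps)
          have h2 : Odd (θ (vneg t)) := hAodd (vneg t) (ifone (vneg t) hqt)
          rw [hanti] at h2
          obtain ⟨k1, hk1⟩ := h1
          obtain ⟨k2, hk2⟩ := h2
          omega
      have hOsub : {v | Odd (θ' v)} ⊆ {v | Odd (θ v)} \ {u} := by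
        intro v hv
        simp only [Set.mem_setOf_eq] at hv
        by_cases h1 : v ∈ A
        · exfalso
          have h2 : vneg v ∉ A := hAnotneg v h1
          simp only [hθ'def, if_pos h1, if_neg h2] at hv
          obtain ⟨k, hk⟩ := hAodd v h1
          obtain ⟨k2, hk2⟩ := hv
          omega
        · by_cases h2 : vneg v ∈ A
          · exfalso
            have hov : Odd (θ v) := by
              have := hAodd _ h2
              rw [hanti] at this
              obtain ⟨k, hk⟩ := this
              exact ⟨-(k+1), by omega⟩
            simp only [hθ'def, if_pos h2, if_neg h1] at hv
            obtain ⟨k, hk⟩ := hov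
            obtain ⟨k2, hk2⟩ := hv
            omega
          · simp only [hθ'def, if_neg h1, if_neg h2] at hv
            refine ⟨by simpa using hv, ?_⟩
            intro hvu
            rw [Set.mem_singleton_iff] at hvu
            subst hvu
            exact h1 Relation.ReflTransGen.refl
      have hfin' : {v | Odd (θ' v)}.Finite :=
        (hfin.subset Set.diff_subset).subset hOsub
      have hcard' : {v | Odd (θ' v)}.ncard ≤ n := by
        have h1 : {v | Odd (θ' v)}.ncard ≤ ({v | Odd (θ v)} \ {u}).ncard :=
          Set.ncard_le_ncard hOsub (hfin.subset Set.diff_subset)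
        have h2 : ({v | Odd (θ v)} \ {u}).ncard = {v | Odd (θ v)}.ncard - 1 :=
          Set.ncard_diff_singleton_of_mem hu
        have h3 : 1 ≤ {v | Odd (θ v)}.ncard := by
          rw [Nat.one_le_iff_ne_zero]
          intro h0
          rw [Set.ncard_eq_zero hfin] at h0
          exact absurd (show u ∈ (∅ : Set (Vtx X)) from h0 ▸ hu) (Set.notMem_empty u)
        omega
      exact ih θ' hanti' hpot' hfin' hcard'
/-! ### The backward direction -/

lemma UC.eqmk (c : UC X) (g : X →₀ ℤ) (h : c.f = g) : c = ⟨g, c.bound⟩ := by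
  cases c; simp_all

lemma backward_dir {φ : Set (UC X)} (hwf : ∀ c ∈ φ, c.IsUTVPI) (hfin : φ.Finite)
    (hnn : NoNegCycle (Gr φ)) (hno : NoOddZero φ) : SatZ φ := by
  classical
  obtain ⟨π, hπ, hπfin⟩ := exists_potential hfin hnn
  set θ : Vtx X → ℤ := fun u => π u - π (vneg u) with hθdef
  have hanti : ∀ u, θ (vneg u) = -θ u := by
    intro u; simp only [hθdef, vneg_vneg]; ring
  have hpot : ∀ e ∈ Gr φ, θ e.2.1 - θ e.1 ≤ 2 * e.2.2 := by
    rintro ⟨s, t, d⟩ he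
    have h1 := hπ _ he
    have h2 := hπ _ (Gr_symm (e := (s, t, d)) he)
    simp only [hθdef] at *
    omega
  have hvneginj : Function.Injective (vneg (X := X)) := by
    intro a b h
    rw [← vneg_vneg a, h, vneg_vneg]
  have hfinO : {u | Odd (θ u)}.Finite := by
    refine Set.Finite.subset (hπfin.union (hπfin.preimage
      (Set.injOn_of_injective hvneginj))) ?_
    intro u hu
    simp only [Set.mem_setOf_eq] at hu
    by_contra hmem
    simp only [Set.mem_union, Set.mem_preimage, Set.mem_setOf_eq, not_or, not_not] at hmem
    obtain ⟨h1, h2⟩ := hmem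
    have : θ u = 0 := by simp only [hθdef]; omega
    rw [this] at hu
    exact (Int.not_odd_iff_even.2 Even.zero) hu
  obtain ⟨θ', hanti', hpot', heven⟩ := parity_fix hno _ θ hanti hpot hfinO (le_refl _)
  set val : Vtx X → ℤ := fun u => θ' u / 2 with hvaldef
  have h2v : ∀ u, 2 * val u = θ' u := by
    intro u
    obtain ⟨k, hk⟩ := heven u
    simp only [hvaldef, hk]
    omega
  set v : X → ℤ := fun x => val (true, x) with hvdef
  refine ⟨v, ?_⟩
  intro c hc
  obtain ⟨a, b, x, y, ha, hb, hcf⟩ := hwf c hc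
  have hvneg : ∀ z : X, val (false, z) = -v z := by
    intro z
    have h0 : θ' (false, z) = -θ' (true, z) := hanti' (true, z)
    have h1 := h2v (false, z)
    have h2 := h2v (true, z)
    simp only [hvdef]
    omega
  have hedge : ∀ s t d, (s, t, d) ∈ Gr φ → val t - val s ≤ d := by
    intro s t d he
    have h0 := hpot' _ he
    have h1 := h2v s
    have h2 := h2v t
    simp only at h0
    omega
  unfold UC.holds
  rw [hcf, sumv]
  rcases ha with rfl | rfl | rfl <;> rcases hb with rfl | rfl | rfl
  · -- a = -1, b = -1
    have hc' : c = ⟨-Finsupp.single x (1:ℤ) - Finsupp.single y (1:ℤ), c.bound⟩ :=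
      c.eqmk _ (by rw [hcf, Finsupp.single_neg, Finsupp.single_neg]; abel)
    have he : ((true, y), (false, x), c.bound) ∈ Gr φ :=
      ⟨c, hc, x, y, c.bound, Or.inr (Or.inr (Or.inl ⟨hc', Or.inl rfl⟩))⟩
    have := hedge _ _ _ he
    rw [hvneg] at this
    simp only [hvdef, valF_pos] at this ⊢
    linarith
  · -- a = -1, b = 0
    have hc' : c = ⟨-Finsupp.single x (1:ℤ), c.bound⟩ :=
      c.eqmk _ (by rw [hcf, Finsupp.single_neg, Finsupp.single_zero, add_zero])
    have he : ((true, x), (false, x), 2 * c.bound) ∈ Gr φ :=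
      ⟨c, hc, x, y, c.bound, Or.inr (Or.inr (Or.inr (Or.inr ⟨hc', rfl⟩)))⟩
    have := hedge _ _ _ he
    rw [hvneg] at this
    linarith
  · -- a = -1, b = 1
    have hc' : c = ⟨Finsupp.single y (1:ℤ) - Finsupp.single x (1:ℤ), c.bound⟩ :=
      c.eqmk _ (by rw [hcf, Finsupp.single_neg]; abel)
    have he : ((true, x), (true, y), c.bound) ∈ Gr φ :=
      ⟨c, hc, y, x, c.bound, Or.inl ⟨hc', Or.inl rfl⟩⟩
    have := hedge _ _ _ he
    linarith
  · -- a = 0, b = -1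
    have hc' : c = ⟨-Finsupp.single y (1:ℤ), c.bound⟩ :=
      c.eqmk _ (by rw [hcf, Finsupp.single_neg, Finsupp.single_zero, zero_add])
    have he : ((true, y), (false, y), 2 * c.bound) ∈ Gr φ :=
      ⟨c, hc, y, x, c.bound, Or.inr (Or.inr (Or.inr (Or.inr ⟨hc', rfl⟩)))⟩
    have := hedge _ _ _ he
    rw [hvneg] at this
    linarith
  · -- a = 0, b = 0
    have hc' : c = ⟨Finsupp.single x (1:ℤ) - Finsupp.single x (1:ℤ), c.bound⟩ :=
      c.eqmk _ (by rw [hcf, Finsupp.single_zero, Finsupp.single_zero, add_zero, sub_self])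
    have he : ((true, x), (true, x), c.bound) ∈ Gr φ :=
      ⟨c, hc, x, x, c.bound, Or.inl ⟨hc', Or.inl rfl⟩⟩
    have := hedge _ _ _ he
    linarith
  · -- a = 0, b = 1
    have hc' : c = ⟨Finsupp.single y (1:ℤ), c.bound⟩ :=
      c.eqmk _ (by rw [hcf, Finsupp.single_zero, zero_add])
    have he : ((false, y), (true, y), 2 * c.bound) ∈ Gr φ :=
      ⟨c, hc, y, x, c.bound, Or.inr (Or.inr (Or.inr (Or.inl ⟨hc', rfl⟩)))⟩
    have := hedge _ _ _ he
    rw [hvneg] at this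
    linarith
  · -- a = 1, b = -1
    have hc' : c = ⟨Finsupp.single x (1:ℤ) - Finsupp.single y (1:ℤ), c.bound⟩ :=
      c.eqmk _ (by rw [hcf, Finsupp.single_neg]; abel)
    have he : ((true, y), (true, x), c.bound) ∈ Gr φ :=
      ⟨c, hc, x, y, c.bound, Or.inl ⟨hc', Or.inl rfl⟩⟩
    have := hedge _ _ _ he
    linarith
  · -- a = 1, b = 0
    have hc' : c = ⟨Finsupp.single x (1:ℤ), c.bound⟩ :=
      c.eqmk _ (by rw [hcf, Finsupp.single_zero, add_zero])
    have he : ((false, x), (true, x), 2 * c.bound) ∈ Gr φ :=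
      ⟨c, hc, x, y, c.bound, Or.inr (Or.inr (Or.inr (Or.inl ⟨hc', rfl⟩)))⟩
    have := hedge _ _ _ he
    rw [hvneg] at this
    linarith
  · -- a = 1, b = 1
    have hc' : c = ⟨Finsupp.single x (1:ℤ) + Finsupp.single y (1:ℤ), c.bound⟩ :=
      c.eqmk _ hcf
    have he : ((false, y), (true, x), c.bound) ∈ Gr φ :=
      ⟨c, hc, x, y, c.bound, Or.inr (Or.inl ⟨hc', Or.inl rfl⟩)⟩
    have := hedge _ _ _ he
    rw [hvneg] at this
    linarith

/-- A (finite) set `φ` of UTVPI constraints is satisfiable in ℤ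
iff its constraint graph `G_φ` has no negative weight cycle and there is no vertex
`u` such that `u` and `-u` lie on a common zero-weight cycle and `wSP(u, -u)` is odd. -/
theorem satZ_iff_no_neg_cycle_and_no_odd_zero_cycle {X : Type*}
    (φ : Set (UC X)) (hwf : ∀ c ∈ φ, c.IsUTVPI) (hfin : φ.Finite) :
    SatZ φ ↔
      (NoNegCycle (Gr φ) ∧
       ¬ ∃ (u a : Vtx X) (p : List (Vtx X × Vtx X × ℤ)),
          IsPath (Gr φ) a p a ∧ p ≠ [] ∧ pweight p = 0 ∧
          u ∈ p.map (fun e => e.1) ∧ vneg u ∈ p.map (fun e => e.1) ∧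
          ∃ t : ℤ, wSP (Gr φ) u (vneg u) = (t : WithTop ℤ) ∧ Odd t) := by
  constructor
  · exact forward_dir
  · rintro ⟨hnn, hno⟩
    exact backward_dir hwf hfin hnn hno

end UTVPIPaper
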